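/- Let A be a positive invertible operator on H, T ∈ B(H), and f(z) = Σ_{n≥0} c_n z^n a power series with complex coefficients converging on D(0,R), R > 0. If ‖T‖_A < R, then r_A(f(T)) ≤ Σ_{n≥0} |c_n| (r_A(T))^n = f_c(r_A(T)). -/

import Mathlib

open ContinuousLinearMap

variable {H : Type*} [NormedAddCommGroup H] [InnerProductSpace ℂ H] [CompleteSpace H]

/-- The seminorm `‖x‖_A = ‖A^{1/2} x‖ = √⟨Ax, x⟩` induced by a positive operator `A`. -/
noncomputable def anorm (A : H →L[ℂ] H) (x : H) : ℝ :=
  Real.sqrt (A.reApplyInnerSelf x)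

/-- `T` is `A`-bounded: `‖Tx‖_A ≤ c ‖x‖_A` for some `c > 0`. -/
def ABounded (A T : H →L[ℂ] H) : Prop :=
  ∃ c : ℝ, 0 < c ∧ ∀ x : H, anorm A (T x) ≤ c * anorm A x

/-- The operator seminorm `‖T‖_A`: the least `c ≥ 0` with `‖Tx‖_A ≤ c ‖x‖_A` for all `x`. -/
noncomputable def aNorm (A T : H →L[ℂ] H) : ℝ :=
  sInf {c : ℝ | 0 ≤ c ∧ ∀ x : H, anorm A (T x) ≤ c * anorm A x}

/-- The `A`-spectral radius `r_A(T) = inf_{n ≥ 1} ‖T^n‖_A^{1/n}`. -/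
noncomputable def aSpecRad (A T : H →L[ℂ] H) : ℝ :=
  ⨅ n : ℕ+, aNorm A (T ^ (n : ℕ)) ^ ((n : ℝ)⁻¹)

/-- The `A`-numerical radius `ω_A(T) = sup {|⟨ATx, x⟩| : ‖x‖_A = 1}`. -/
noncomputable def aNumRad (A T : H →L[ℂ] H) : ℝ :=
  sSup {c : ℝ | ∃ x : H, anorm A x = 1 ∧ c = ‖(inner ℂ (A (T x)) x : ℂ)‖}

/-!
Conjugation by the invertible operator `A^{1/2}` is a continuous algebra automorphism `Φ` of
`B(H)` with `‖T‖_A = ‖Φ T‖`, since `‖x‖_A = ‖A^{1/2} x‖`; by Gelfand's formula `r_A(T)` is then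
the ordinary spectral radius of `Φ T`, and `Φ (f T) = ∑ cₙ (Φ T)ⁿ`. So it suffices to show
`r(∑ cₙ aⁿ) ≤ ∑ |cₙ| r(a)ⁿ` in a complex Banach algebra. Pass to the closed subalgebra generated
by `a`, which is commutative and computes the same spectral radii (the norms of powers agree):
there every spectral value of `b = ∑ cₙ aⁿ` is `χ b = ∑ cₙ (χ a)ⁿ` for a character `χ`, and
`|χ a| ≤ r(a)` because `χ a` lies in the spectrum of `a`.
-/

open scoped NNReal ENNReal
open Filter

section BanachAlgebra

variable {E : Type*} [NormedRing E] [NormedAlgebra ℂ E] [CompleteSpace E]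

-- `‖1‖ ≤ 1` rather than `NormOneClass E`, so that `H →L[ℂ] H` qualifies also when `H` is trivial.
theorem spectralRadius_eq_iInf_enorm_pow_rpow (h1 : ‖(1 : E)‖ ≤ 1) (a : E) :
    spectralRadius ℂ a = ⨅ n : ℕ+, ‖a ^ (n : ℕ)‖ₑ ^ ((n : ℝ)⁻¹) := by
  refine le_antisymm (le_iInf fun n => ?_) ?_
  · obtain ⟨k, rfl⟩ : ∃ k : ℕ, n = k.succPNat := ⟨n.natPred, (PNat.succPNat_natPred n).symm⟩
    have h1' : (‖(1 : E)‖₊ : ℝ≥0∞) ^ (1 / (k + 1) : ℝ) ≤ 1 :=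
      ENNReal.rpow_le_one (by exact_mod_cast h1) (by positivity)
    simpa [enorm_eq_nnnorm] using
      (spectrum.spectralRadius_le_pow_nnnorm_pow_one_div ℂ a k).trans
        (mul_le_of_le_one_right' h1')
  · refine ge_of_tendsto (spectrum.pow_nnnorm_pow_one_div_tendsto_nhds_spectralRadius a) ?_
    filter_upwards [eventually_ge_atTop 1] with n hn
    rw [one_div]
    exact iInf_le (fun m : ℕ+ => ‖a ^ (m : ℕ)‖ₑ ^ ((m : ℝ)⁻¹)) ⟨n, hn⟩

theorem Subalgebra.spectralRadius_coe (S : Subalgebra ℂ E) [CompleteSpace S] (x : S) :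
    spectralRadius ℂ (x : E) = spectralRadius ℂ x := by
  refine tendsto_nhds_unique
    (spectrum.pow_nnnorm_pow_one_div_tendsto_nhds_spectralRadius (x : E)) ?_
  simp_rw [← SubmonoidClass.coe_pow]
  exact spectrum.pow_nnnorm_pow_one_div_tendsto_nhds_spectralRadius x

theorem spectralRadius_le_tsum_of_hasSum_of_comm {𝒜 : Type*} [NormedCommRing 𝒜]
    [NormedAlgebra ℂ 𝒜] [CompleteSpace 𝒜] {a b : 𝒜} {c : ℕ → ℂ}
    (hb : HasSum (fun n => c n • a ^ n) b) :
    spectralRadius ℂ b ≤ ∑' n, ‖c n‖ₑ * spectralRadius ℂ a ^ n := by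
  refine iSup₂_le fun μ hμ => ?_
  obtain ⟨χ, rfl⟩ := WeakDual.CharacterSpace.mem_spectrum_iff_exists.mp hμ
  have hχb : HasSum (fun n => c n * χ a ^ n) (χ b) := by
    simpa [Function.comp_def, smul_eq_mul] using hb.map χ (map_continuous χ)
  have hχa : ‖χ a‖ₑ ≤ spectralRadius ℂ a :=
    le_iSup₂ (f := fun k (_ : k ∈ spectrum ℂ a) => (‖k‖₊ : ℝ≥0∞)) _
      (WeakDual.CharacterSpace.apply_mem_spectrum χ a)
  calc (‖χ b‖₊ : ℝ≥0∞) ≤ ∑' n, ‖c n‖ₑ * ‖χ a‖ₑ ^ n :=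
        hχb.enorm_le_of_bounded ENNReal.summable.hasSum fun n => by simp [enorm_mul]
    _ ≤ ∑' n, ‖c n‖ₑ * spectralRadius ℂ a ^ n := by gcongr

theorem spectralRadius_le_tsum_of_hasSum {a b : E} {c : ℕ → ℂ}
    (hb : HasSum (fun n => c n • a ^ n) b) :
    spectralRadius ℂ b ≤ ∑' n, ‖c n‖ₑ * spectralRadius ℂ a ^ n := by
  let C := Algebra.elemental ℂ a
  let _ : NormedCommRing C := { (inferInstance : NormedRing C) with mul_comm := mul_comm }
  have hC : ∀ n, c n • a ^ n ∈ C := fun n =>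
    Subalgebra.smul_mem _ (pow_mem (Algebra.elemental.self_mem ℂ a) n) _
  have hbC : b ∈ C := (Algebra.elemental.isClosed ℂ a).mem_of_tendsto hb
    (Eventually.of_forall fun s => sum_mem fun n _ => hC n)
  let a' : C := ⟨a, Algebra.elemental.self_mem ℂ a⟩
  have hb' : HasSum (fun n => c n • a' ^ n) ⟨b, hbC⟩ := by
    rw [HasSum, Topology.IsEmbedding.subtypeVal.tendsto_nhds_iff]
    simpa [Function.comp_def, HasSum] using hb
  change spectralRadius ℂ ((⟨b, hbC⟩ : C) : E) ≤ ∑' n, ‖c n‖ₑ * spectralRadius ℂ (a' : E) ^ n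
  rw [Subalgebra.spectralRadius_coe, Subalgebra.spectralRadius_coe]
  exact spectralRadius_le_tsum_of_hasSum_of_comm hb'

end BanachAlgebra

theorem summable_norm_mul_pow_of_lt {c : ℕ → ℂ} {R : ℝ}
    (hconv : ∀ z : ℂ, ‖z‖ < R → Summable fun n => c n * z ^ n) {x : ℝ} (hx : 0 ≤ x)
    (hxR : x < R) : Summable fun n => ‖c n‖ * x ^ n := by
  obtain ⟨y, hxy, hyR⟩ := exists_between hxR
  lift x to ℝ≥0 using hx
  lift y to ℝ≥0 using x.2.trans hxy.le
  let p := FormalMultilinearSeries.ofScalars ℂ c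
  have hyp : (y : ℝ≥0∞) ≤ p.radius := by
    refine p.le_radius_of_tendsto (l := 0) ?_
    simpa [p, FormalMultilinearSeries.ofScalars_norm] using
      (hconv y (by simpa using hyR)).tendsto_atTop_zero.norm
  simpa [p, FormalMultilinearSeries.ofScalars_norm] using
    p.summable_norm_mul_pow (lt_of_lt_of_le (by exact_mod_cast hxy) hyp)

omit [CompleteSpace H] in
lemma aNorm_nonneg (A T : H →L[ℂ] H) : 0 ≤ aNorm A T :=
  Real.sInf_nonneg fun _ hc => hc.1

omit [CompleteSpace H] in
lemma aSpecRad_nonneg (A T : H →L[ℂ] H) : 0 ≤ aSpecRad A T :=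
  le_ciInf fun _ => Real.rpow_nonneg (aNorm_nonneg A _) _

omit [CompleteSpace H] in
lemma aSpecRad_le_aNorm (A T : H →L[ℂ] H) : aSpecRad A T ≤ aNorm A T := by
  unfold aSpecRad
  have hbdd : BddBelow (Set.range fun n : ℕ+ => aNorm A (T ^ (n : ℕ)) ^ ((n : ℝ)⁻¹)) :=
    ⟨0, by rintro _ ⟨n, rfl⟩; exact Real.rpow_nonneg (aNorm_nonneg A _) _⟩
  simpa using ciInf_le hbdd 1

lemma anorm_eq_norm_sqrt_apply {A : H →L[ℂ] H} (hA : A.IsPositive) (x : H) :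
    anorm A x = ‖CFC.sqrt A x‖ := by
  have hA' : 0 ≤ A := (nonneg_iff_isPositive A).mpr hA
  have hsa : IsSelfAdjoint (CFC.sqrt A) := (CFC.sqrt_nonneg A).isSelfAdjoint
  rw [anorm, reApplyInnerSelf_apply, apply_norm_eq_sqrt_inner_adjoint_left, hsa.adjoint_eq,
    ← mul_def, CFC.sqrt_mul_sqrt_self A hA']

lemma exists_anorm_eq_norm {A : H →L[ℂ] H} (hA : A.IsPositive) (hAinv : IsUnit A) :
    ∃ e : H ≃L[ℂ] H, ∀ x, anorm A x = ‖e x‖ := by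
  have hA' : 0 ≤ A := (nonneg_iff_isPositive A).mpr hA
  obtain ⟨u, hu⟩ := (CFC.isUnit_sqrt_iff A hA').mpr hAinv
  exact ⟨ContinuousLinearEquiv.unitsEquiv ℂ H u, fun x => by
    rw [anorm_eq_norm_sqrt_apply hA, ← hu]; rfl⟩

section Conjugation

variable {A : H →L[ℂ] H} {e : H ≃L[ℂ] H}

omit [CompleteSpace H] in
lemma aNorm_eq_norm_conj (he : ∀ x, anorm A x = ‖e x‖) (X : H →L[ℂ] H) :
    aNorm A X = ‖e.conjContinuousAlgEquiv X‖ := by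
  refine IsLeast.csInf_eq ⟨⟨norm_nonneg _, fun x => ?_⟩, fun c ⟨hc0, hc⟩ => ?_⟩
  · calc anorm A (X x) = ‖e.conjContinuousAlgEquiv X (e x)‖ := by simp [he]
      _ ≤ ‖e.conjContinuousAlgEquiv X‖ * anorm A x := by rw [he]; exact le_opNorm _ _
  · refine opNorm_le_bound _ hc0 fun y => ?_
    calc ‖e.conjContinuousAlgEquiv X y‖ = anorm A (X (e.symm y)) := by simp [he]
      _ ≤ c * anorm A (e.symm y) := hc _
      _ = c * ‖y‖ := by simp [he]

lemma ofReal_aSpecRad (he : ∀ x, anorm A x = ‖e x‖) (X : H →L[ℂ] H) :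
    ENNReal.ofReal (aSpecRad A X) = spectralRadius ℂ (e.conjContinuousAlgEquiv X) := by
  rw [spectralRadius_eq_iInf_enorm_pow_rpow norm_id_le, aSpecRad, ENNReal.ofReal_iInf]
  congr 1 with n
  rw [← ENNReal.ofReal_rpow_of_nonneg (aNorm_nonneg A _) (by positivity), aNorm_eq_norm_conj he,
    map_pow, ofReal_norm]

end Conjugation

theorem stmt19_general (A T fT : H →L[ℂ] H) (hA : A.IsPositive) (hAinv : IsUnit A)
    (c : ℕ → ℂ) (R : ℝ)
    (hconv : ∀ z : ℂ, ‖z‖ < R → Summable fun n : ℕ => c n * z ^ n)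
    (hT : aNorm A T < R)
    (hfT : HasSum (fun n : ℕ => c n • T ^ n) fT) :
    aSpecRad A fT ≤ ∑' n : ℕ, ‖c n‖ * (aSpecRad A T) ^ n := by
  obtain ⟨e, he⟩ := exists_anorm_eq_norm hA hAinv
  let Φ := e.conjContinuousAlgEquiv
  have hr := aSpecRad_nonneg A T
  have hsum := summable_norm_mul_pow_of_lt hconv hr ((aSpecRad_le_aNorm A T).trans_lt hT)
  have hterm : ∀ n, 0 ≤ ‖c n‖ * aSpecRad A T ^ n := fun n => by positivity
  have hΦ : HasSum (fun n => c n • Φ T ^ n) (Φ fT) := by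
    simpa [Function.comp_def] using hfT.map Φ Φ.continuous
  rw [← ENNReal.ofReal_le_ofReal_iff (tsum_nonneg hterm), ofReal_aSpecRad he,
    ENNReal.ofReal_tsum_of_nonneg hterm hsum]
  refine (spectralRadius_le_tsum_of_hasSum hΦ).trans_eq (tsum_congr fun n => ?_)
  rw [ENNReal.ofReal_mul (norm_nonneg _), ofReal_norm, ENNReal.ofReal_pow hr, ofReal_aSpecRad he]

/-- if `A` is positive and invertible, `f(z) = ∑ cₙ zⁿ` converges on
`D(0, R)`, `‖T‖_A < R`, and `f(T) = ∑ cₙ Tⁿ`, then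
`r_A(f(T)) ≤ ∑ |cₙ| (r_A(T))ⁿ = f_c(r_A(T))`. -/
theorem stmt19 (A T fT : H →L[ℂ] H) (hA : A.IsPositive) (hAinv : IsUnit A)
    (c : ℕ → ℂ) (R : ℝ) (hR : 0 < R)
    (hconv : ∀ z : ℂ, ‖z‖ < R → Summable fun n : ℕ => c n * z ^ n)
    (hT : aNorm A T < R)
    (hfT : HasSum (fun n : ℕ => c n • T ^ n) fT) :
    aSpecRad A fT ≤ ∑' n : ℕ, ‖c n‖ * (aSpecRad A T) ^ n :=
  stmt19_general A T fT hA hAinv c R hconv hT hfT
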